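/- arXiv:2304.06903 — 3 statements merged into one kernel-verified Lean document; each statement's English description precedes it below -/
import Mathlib

section
/- Let n ≥ 1 and let c > 12 be a constant. Then Σ_{1 ≤ s ≤ t ≤ n/e} C(n,s)·C(n,t)·exp(-(c/2)·t·log(e n / t)) ≤ n^{-(c-12)/2}, where C(n,k) denotes the binomial coefficient. -/
lemma aux_pow_div_fact (k : ℕ) : (k:ℝ)^k / k.factorial ≤ Real.exp k := by
  have h := Real.sum_le_exp_of_nonneg (x := (k:ℝ)) (by positivity) (k+1)
  refine le_trans ?_ h
  have := Finset.single_le_sum (f := fun i => (k:ℝ)^i / i.factorial)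
    (fun i _ => by positivity) (Finset.self_mem_range_succ k)
  simpa using this

lemma aux_choose_le (n k : ℕ) (hk : 1 ≤ k) (hkn : k ≤ n) :
    (n.choose k : ℝ) ≤ Real.exp (k * Real.log (Real.exp 1 * n / k)) := by
  have hk0 : (0:ℝ) < k := by exact_mod_cast hk
  have hn0 : (0:ℝ) < n := by exact_mod_cast hk.trans hkn
  have hx : (0:ℝ) < Real.exp 1 * n / k := by positivity
  have hrhs : Real.exp ((k:ℝ) * Real.log (Real.exp 1 * n / k))
      = (Real.exp 1 * n / k) ^ k := by
    rw [Real.exp_nat_mul, Real.exp_log hx]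
  rw [hrhs]
  have h1 : (n.choose k : ℝ) ≤ (n:ℝ)^k / k.factorial := by
    exact_mod_cast Nat.choose_le_pow_div k n
  refine h1.trans ?_
  have hfact : (0:ℝ) < k.factorial := by exact_mod_cast k.factorial_pos
  have h2 : (k:ℝ)^k ≤ Real.exp k * k.factorial := by
    have := aux_pow_div_fact k
    rw [div_le_iff₀ hfact] at this
    exact this
  have hexpand : (Real.exp 1 * n / k) ^ k = Real.exp k * (n:ℝ)^k / (k:ℝ)^k := by
    rw [div_pow, mul_pow, Real.exp_one_pow]
  rw [hexpand, div_le_div_iff₀ hfact (by positivity)]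
  calc (n:ℝ)^k * (k:ℝ)^k ≤ (n:ℝ)^k * (Real.exp k * k.factorial) := by
        exact mul_le_mul_of_nonneg_left h2 (by positivity)
    _ = Real.exp k * (n:ℝ)^k * k.factorial := by ring

lemma aux_mono {s t N : ℝ} (hs : 1 ≤ s) (hst : s ≤ t) (htN : t ≤ N) :
    s * Real.log (Real.exp 1 * N / s) ≤ t * Real.log (Real.exp 1 * N / t) := by
  have hs0 : (0:ℝ) < s := lt_of_lt_of_le one_pos hs
  have ht0 : (0:ℝ) < t := lt_of_lt_of_le hs0 hst
  have hN0 : (0:ℝ) < N := lt_of_lt_of_le ht0 htN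
  have hlog1 : 1 ≤ Real.log (Real.exp 1 * N / t) := by
    rw [Real.le_log_iff_exp_le (by positivity)]
    rw [mul_div_assoc]
    exact le_mul_of_one_le_right (Real.exp_pos 1).le ((one_le_div ht0).2 htN)
  have hsplit : Real.log (Real.exp 1 * N / s)
      = Real.log (Real.exp 1 * N / t) + Real.log (t / s) := by
    rw [← Real.log_mul (by positivity) (by positivity)]
    congr 1
    field_simp
  have hlog2 : Real.log (t / s) ≤ t / s - 1 := Real.log_le_sub_one_of_pos (by positivity)
  have key : s * (t / s - 1) = t - s := by field_simp
  rw [hsplit]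
  have h3 : s * Real.log (t / s) ≤ t - s := by
    calc s * Real.log (t/s) ≤ s * (t/s - 1) := mul_le_mul_of_nonneg_left hlog2 hs0.le
      _ = t - s := key
  nlinarith [mul_le_mul_of_nonneg_left hlog1 (sub_nonneg.2 hst)]
open Finset in
/-- Union-bound computation: for `n ≥ 1` and a constant `c > 12`,
`∑_{1 ≤ s ≤ t ≤ n/e} C(n,s) C(n,t) exp(-(c/2) t log(e n / t)) ≤ n^{-(c-12)/2}`. -/
theorem stmt_3 (n : ℕ) (hn : 1 ≤ n) (c : ℝ) (hc : 12 < c) :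
    ∑ t ∈ (Finset.Icc 1 n).filter (fun t : ℕ => (t : ℝ) ≤ (n : ℝ) / Real.exp 1),
      ∑ s ∈ Finset.Icc 1 t,
        (n.choose s : ℝ) * (n.choose t : ℝ) *
          Real.exp (-(c / 2) * (t : ℝ) * Real.log (Real.exp 1 * (n : ℝ) / (t : ℝ)))
      ≤ (n : ℝ) ^ (-(c - 12) / 2) := by
  have hn0 : (0:ℝ) < n := by exact_mod_cast hn
  have hn1 : (1:ℝ) ≤ n := by exact_mod_cast hn
  set B : ℝ := (n:ℝ) ^ ((2:ℝ) - c/2) with hB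
  have hB0 : 0 ≤ B := Real.rpow_nonneg hn0.le _
  have hterm : ∀ t ∈ (Finset.Icc 1 n).filter
      (fun t : ℕ => (t : ℝ) ≤ (n : ℝ) / Real.exp 1), ∀ s ∈ Finset.Icc 1 t,
      (n.choose s : ℝ) * (n.choose t : ℝ) *
        Real.exp (-(c / 2) * (t : ℝ) * Real.log (Real.exp 1 * (n : ℝ) / (t : ℝ))) ≤ B := by
    intro t ht s hs
    rw [Finset.mem_filter, Finset.mem_Icc] at ht
    rw [Finset.mem_Icc] at hs
    obtain ⟨⟨ht1, htn⟩, _⟩ := ht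
    obtain ⟨hs1, hst⟩ := hs
    have ht1' : (1:ℝ) ≤ t := by exact_mod_cast ht1
    have htn' : (t:ℝ) ≤ n := by exact_mod_cast htn
    have hst' : (s:ℝ) ≤ t := by exact_mod_cast hst
    have hs1' : (1:ℝ) ≤ s := by exact_mod_cast hs1
    set A : ℝ := (t:ℝ) * Real.log (Real.exp 1 * n / t) with hA
    have hA1 : 1 + Real.log n ≤ A := by
      have := aux_mono (s := 1) (t := (t:ℝ)) (N := (n:ℝ)) le_rfl ht1' htn'
      rw [div_one, Real.log_mul (Real.exp_pos 1).ne' hn0.ne', Real.log_exp] at this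
      simpa using this
    have hA0 : 0 < A := lt_of_lt_of_le (by positivity) hA1
    have hcs : (n.choose s : ℝ) ≤ Real.exp A := by
      refine (aux_choose_le n s hs1 (hst.trans htn)).trans (Real.exp_le_exp.2 ?_)
      exact aux_mono hs1' hst' htn'
    have hct : (n.choose t : ℝ) ≤ Real.exp A :=
      (aux_choose_le n t ht1 htn).trans le_rfl
    have hchoose_s0 : (0:ℝ) ≤ (n.choose s : ℝ) := by positivity
    have hchoose_t0 : (0:ℝ) ≤ (n.choose t : ℝ) := by positivity
    have hexprw : Real.exp (-(c / 2) * (t : ℝ) * Real.log (Real.exp 1 * n / t))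
        = Real.exp (-(c/2) * A) := by rw [hA]; ring_nf
    calc (n.choose s : ℝ) * (n.choose t : ℝ) *
          Real.exp (-(c / 2) * (t : ℝ) * Real.log (Real.exp 1 * n / t))
        ≤ Real.exp A * Real.exp A * Real.exp (-(c/2) * A) := by
          rw [hexprw]
          have := mul_le_mul hcs hct hchoose_t0 (Real.exp_pos A).le
          exact mul_le_mul_of_nonneg_right this (Real.exp_pos _).le
      _ = Real.exp ((2 - c/2) * A) := by
          rw [← Real.exp_add, ← Real.exp_add]; ring_nf
      _ ≤ Real.exp ((2 - c/2) * (1 + Real.log n)) := by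
          apply Real.exp_le_exp.2
          have hneg : (2 - c/2) < 0 := by linarith
          nlinarith
      _ = Real.exp (2 - c/2) * Real.exp ((2 - c/2) * Real.log n) := by
          rw [← Real.exp_add]; ring_nf
      _ ≤ 1 * B := by
          apply mul_le_mul
          · exact Real.exp_le_one_iff.2 (by linarith)
          · rw [hB, Real.rpow_def_of_pos hn0]
            apply le_of_eq; ring_nf
          · positivity
          · norm_num
      _ = B := one_mul B
  have hinner : ∀ t ∈ (Finset.Icc 1 n).filter
      (fun t : ℕ => (t : ℝ) ≤ (n : ℝ) / Real.exp 1),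
      (∑ s ∈ Finset.Icc 1 t,
        (n.choose s : ℝ) * (n.choose t : ℝ) *
          Real.exp (-(c / 2) * (t : ℝ) * Real.log (Real.exp 1 * (n : ℝ) / (t : ℝ))))
        ≤ (n:ℝ) * B := by
    intro t ht
    have htn : t ≤ n := (Finset.mem_Icc.1 (Finset.mem_filter.1 ht).1).2
    calc (∑ s ∈ Finset.Icc 1 t, (n.choose s : ℝ) * (n.choose t : ℝ) *
          Real.exp (-(c / 2) * (t : ℝ) * Real.log (Real.exp 1 * (n : ℝ) / (t : ℝ))))
        ≤ (Finset.Icc 1 t).card • B := Finset.sum_le_card_nsmul _ _ _ (hterm t ht)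
      _ = ((Finset.Icc 1 t).card : ℝ) * B := nsmul_eq_mul _ _
      _ ≤ (n:ℝ) * B := by
          apply mul_le_mul_of_nonneg_right _ hB0
          rw [Nat.card_Icc]
          exact_mod_cast Nat.le_trans (by omega) htn
  calc (∑ t ∈ (Finset.Icc 1 n).filter (fun t : ℕ => (t : ℝ) ≤ (n : ℝ) / Real.exp 1),
        ∑ s ∈ Finset.Icc 1 t, (n.choose s : ℝ) * (n.choose t : ℝ) *
          Real.exp (-(c / 2) * (t : ℝ) * Real.log (Real.exp 1 * (n : ℝ) / (t : ℝ))))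
      ≤ ((Finset.Icc 1 n).filter
          (fun t : ℕ => (t : ℝ) ≤ (n : ℝ) / Real.exp 1)).card • ((n:ℝ) * B) :=
        Finset.sum_le_card_nsmul _ _ _ hinner
    _ = (((Finset.Icc 1 n).filter
          (fun t : ℕ => (t : ℝ) ≤ (n : ℝ) / Real.exp 1)).card : ℝ) * ((n:ℝ) * B) :=
        nsmul_eq_mul _ _
    _ ≤ (n:ℝ) * ((n:ℝ) * B) := by
        apply mul_le_mul_of_nonneg_right _ (by positivity)
        have : ((Finset.Icc 1 n).filter
            (fun t : ℕ => (t : ℝ) ≤ (n : ℝ) / Real.exp 1)).card ≤ n := by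
          calc _ ≤ (Finset.Icc 1 n).card := Finset.card_filter_le _ _
            _ = n := by rw [Nat.card_Icc]; omega
        exact_mod_cast this
    _ = (n:ℝ) ^ ((4:ℝ) - c/2) := by
        rw [hB]
        rw [show (n:ℝ) * ((n:ℝ) * (n:ℝ) ^ ((2:ℝ) - c/2)) =
            (n:ℝ)^(1:ℝ) * ((n:ℝ)^(1:ℝ) * (n:ℝ) ^ ((2:ℝ) - c/2)) by
          rw [Real.rpow_one]]
        rw [← Real.rpow_add hn0, ← Real.rpow_add hn0]
        norm_num
        ring_nf
    _ ≤ (n : ℝ) ^ (-(c - 12) / 2) := by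
        apply Real.rpow_le_rpow_of_exponent_le hn1
        linarith
end

section
/- Let B be a symmetric n×n real matrix with top-r eigenvector matrix U (orthonormal columns) and corresponding eigenvalue matrix Λ, so BU = UΛ. Let B^{(i)} be B with the i-th row and column zeroed out. Then ‖(B^{(i)} − B)U‖_F ≤ (‖Λ‖ + ‖B_{i:}‖₂)·‖U_{i:}‖₂. -/
/-!
Row `i` of `(B⁽ⁱ⁾ - B) U` is `-(B U)_{i:} = -U_{i:} Λ`, whose norm is at most
`‖Λ‖ ‖U_{i:}‖` because every diagonal entry of `Λ` is bounded by its spectral norm. Any other row `j` is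
`-B_{ji} U_{i:}`, and by symmetry these rows have total squared norm at most
`‖B_{i:}‖² ‖U_{i:}‖²`. The two squared contributions add, and `√(a² + b²) ≤ a + b`.
-/

/-- The spectral (ℓ₂ operator) norm of a real square matrix. -/
noncomputable def specNorm {r : ℕ} (M : Matrix (Fin r) (Fin r) ℝ) : ℝ :=
  ‖Matrix.toEuclideanCLM (𝕜 := ℝ) M‖

open Finset Matrix

theorem abs_apply_le_specNorm {r : ℕ} (M : Matrix (Fin r) (Fin r) ℝ) (s t : Fin r) :
    |M s t| ≤ specNorm M := by
  let T := toEuclideanCLM (𝕜 := ℝ) M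
  have hcol : T (EuclideanSpace.single t 1) s = M s t := by
    simp [T, EuclideanSpace.single, mulVec_single]
  calc |M s t| = ‖T (EuclideanSpace.single t 1) s‖ := by rw [hcol, Real.norm_eq_abs]
    _ ≤ ‖T (EuclideanSpace.single t 1)‖ := PiLp.norm_apply_le _ s
    _ ≤ ‖T‖ * ‖EuclideanSpace.single t (1 : ℝ)‖ := T.le_opNorm _
    _ = specNorm M := by rw [PiLp.norm_single, norm_one, mul_one]; rfl

section ZeroRowCol

variable {m n R : Type*} [Fintype n] [DecidableEq n] [Ring R] {B Bi : Matrix n n R} {i : n}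

theorem sub_mul_apply_self_of_zeroRowCol
    (hBi : ∀ j k, Bi j k = if j = i ∨ k = i then 0 else B j k)
    (U : Matrix n m R) (s : m) : ((Bi - B) * U) i s = -(B * U) i s := by
  simp [mul_apply, hBi]

theorem sub_mul_apply_of_zeroRowCol_of_ne
    (hBi : ∀ j k, Bi j k = if j = i ∨ k = i then 0 else B j k)
    (U : Matrix n m R) {j : n} (hj : j ≠ i) (s : m) : ((Bi - B) * U) j s = -(B j i * U i s) := by
  rw [mul_apply, sum_eq_single i]
  · simp [hBi, hj]
  · intro k _ hk
    simp [hBi, hj, hk]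
  · simp

end ZeroRowCol

theorem sqrt_le_add_mul_sqrt {S a b x : ℝ} (ha : 0 ≤ a) (hb : 0 ≤ b) (hx : 0 ≤ x)
    (h : S ≤ a ^ 2 * x + b ^ 2 * x) : √S ≤ (a + b) * √x := by
  rw [← Real.sqrt_sq (add_nonneg ha hb), ← Real.sqrt_mul (sq_nonneg _)]
  exact Real.sqrt_le_sqrt (h.trans (by nlinarith [mul_nonneg (mul_nonneg ha hb) hx]))

theorem sum_sq_mul_le_of_abs_le {ι : Type*} [Fintype ι] {u d : ι → ℝ} {c : ℝ}
    (hd : ∀ s, |d s| ≤ c) :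
    ∑ s, (u s * d s) ^ 2 ≤ c ^ 2 * ∑ s, u s ^ 2 := by
  rw [mul_sum]
  refine sum_le_sum fun s _ => ?_
  rw [mul_pow, mul_comm, ← sq_abs (d s)]
  exact mul_le_mul_of_nonneg_right (pow_le_pow_left₀ (abs_nonneg _) (hd s) 2) (sq_nonneg _)

open Finset in
theorem stmt_7_general (n r : ℕ) (B : Matrix (Fin n) (Fin n) ℝ) (hB : B.IsSymm)
    (U : Matrix (Fin n) (Fin r) ℝ)
    (Λ : Matrix (Fin r) (Fin r) ℝ) (hΛ : ∀ s t, s ≠ t → Λ s t = 0)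
    (heig : B * U = U * Λ)
    (i : Fin n) (Bi : Matrix (Fin n) (Fin n) ℝ)
    (hBi : ∀ j k, Bi j k = if j = i ∨ k = i then 0 else B j k) :
    Real.sqrt (∑ j, ∑ s, ((Bi - B) * U) j s ^ 2) ≤
      (specNorm Λ + Real.sqrt (∑ j, B i j ^ 2)) * Real.sqrt (∑ s, U i s ^ 2) := by
  have hUΛ : U * Λ = U * diagonal Λ.diag := by
    rw [IsDiag.diagonal_diag fun s t h => hΛ s t h]
  have hrow : ∀ s, ((Bi - B) * U) i s = -(U i s * Λ s s) := fun s => by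
    rw [sub_mul_apply_self_of_zeroRowCol hBi, heig, hUΛ, mul_diagonal, diag_apply]
  have hrow_le : ∑ s, ((Bi - B) * U) i s ^ 2 ≤ specNorm Λ ^ 2 * ∑ s, U i s ^ 2 := by
    simp only [hrow, neg_sq]
    exact sum_sq_mul_le_of_abs_le fun s => abs_apply_le_specNorm Λ s s
  have hrows_le : ∑ j ∈ univ.erase i, ∑ s, ((Bi - B) * U) j s ^ 2 ≤
      √(∑ j, B i j ^ 2) ^ 2 * ∑ s, U i s ^ 2 := by
    rw [Real.sq_sqrt (by positivity), sum_mul]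
    refine (sum_le_sum fun j hj => le_of_eq ?_).trans
      (sum_le_sum_of_subset_of_nonneg (erase_subset i univ) fun _ _ _ => by positivity)
    simp only [sub_mul_apply_of_zeroRowCol_of_ne hBi U (ne_of_mem_erase hj), neg_sq, mul_pow,
      ← mul_sum, hB.apply i j]
  refine sqrt_le_add_mul_sqrt (norm_nonneg _) (Real.sqrt_nonneg _) (by positivity) ?_
  rw [← add_sum_erase _ _ (mem_univ i)]
  exact add_le_add hrow_le hrows_le

open Finset in
/-- If `B U = U Λ` with `U` having orthonormal columns and `Λ` diagonal, and
`B⁽ⁱ⁾` is `B` with the `i`-th row and column zeroed out, then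
`‖(B⁽ⁱ⁾ - B) U‖_F ≤ (‖Λ‖ + ‖B_{i:}‖₂) ‖U_{i:}‖₂`. -/
theorem stmt_7 (n r : ℕ) (B : Matrix (Fin n) (Fin n) ℝ) (hB : B.IsSymm)
    (U : Matrix (Fin n) (Fin r) ℝ) (hU : U.transpose * U = 1)
    (Λ : Matrix (Fin r) (Fin r) ℝ) (hΛ : ∀ s t, s ≠ t → Λ s t = 0)
    (heig : B * U = U * Λ)
    (i : Fin n) (Bi : Matrix (Fin n) (Fin n) ℝ)
    (hBi : ∀ j k, Bi j k = if j = i ∨ k = i then 0 else B j k) :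
    Real.sqrt (∑ j, ∑ s, ((Bi - B) * U) j s ^ 2) ≤
      (specNorm Λ + Real.sqrt (∑ j, B i j ^ 2)) * Real.sqrt (∑ s, U i s ^ 2) :=
  stmt_7_general n r B hB U Λ hΛ heig i Bi hBi
end

section
/- Let (Aᵢ)_{i∈[n]} be independent Bernoulli random variables with parameters pᵢ ≤ p, and let (xᵢ) be reals with Σᵢ xᵢ² ≤ 1, |xᵢ| ≤ 1, and Σᵢ|xᵢ| ≤ √n. Set Y = Σᵢ Aᵢ xᵢ. Then E[Y⁴] ≤ C·(p·Σᵢxᵢ⁴ + p²·(Σᵢxᵢ²)² + p³·Σᵢ|xᵢ|·Σᵢ|xᵢ|³ + p⁴·(Σᵢ|xᵢ|)⁴) for an absolute constant C ≤ 6. -/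
/-!
Replacing `xᵢ` by `|xᵢ|` can only increase `E[Y⁴]`, so take the weights `yᵢ ≥ 0`. Since `B² = B`
for a Bernoulli variable `B` of mean `q` independent of `W`,
`E[(W + tB)^k] = E[W^k] + q ∑_{j<k} C(k,j) t^(k-j) E[W^j]`, and adding the indices one at a time
bounds `E[Y^k]`, `k ≤ 4`, by the polynomial in `p` and the power sums `Pⱼ = ∑ yᵢ^j` in which
every pattern of `m` distinct indices in the expansion of `Y^k` contributes `p^m`. In the fourth
bound the terms `4p² P₃P₁` and `6p³ P₂P₁²`, which are not of the required shape, are absorbed by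
AM-GM using the Cauchy-Schwarz inequalities `P₃² ≤ P₄P₂` and `P₂² ≤ P₃P₁`.
-/

open MeasureTheory ProbabilityTheory Finset

lemma three_mul_le_add_two_mul_of_pow_three_le {a c d : ℝ} (ha : 0 ≤ a) (hc : 0 ≤ c)
    (h : d ^ 3 ≤ a * c ^ 2) : 3 * d ≤ a + 2 * c := by
  have hmean : d ^ 3 ≤ ((a + 2 * c) / 3) ^ 3 := by
    nlinarith [mul_nonneg (sq_nonneg (a - c)) (by linarith : 0 ≤ a + 8 * c)]
  linarith [le_of_pow_le_pow_left₀ three_ne_zero (by positivity) hmean]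

section PowerSums

variable {ι : Type*} (s : Finset ι) {y : ι → ℝ}

lemma sq_sum_pow_three_le (hy : ∀ i ∈ s, 0 ≤ y i) :
    (∑ i ∈ s, y i ^ 3) ^ 2 ≤ (∑ i ∈ s, y i ^ 4) * ∑ i ∈ s, y i ^ 2 :=
  sum_sq_le_sum_mul_sum_of_sq_le_mul s (fun i hi => pow_nonneg (hy i hi) 4)
    (fun i _ => sq_nonneg _) fun i _ => le_of_eq (by ring)

lemma sq_sum_sq_le (hy : ∀ i ∈ s, 0 ≤ y i) :
    (∑ i ∈ s, y i ^ 2) ^ 2 ≤ (∑ i ∈ s, y i ^ 3) * ∑ i ∈ s, y i :=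
  sum_sq_le_sum_mul_sum_of_sq_le_mul s (fun i hi => pow_nonneg (hy i hi) 3) hy
    fun i _ => le_of_eq (by ring)

lemma abs_sum_mul_le_sum_abs {a : ι → ℝ} (ha : ∀ i ∈ s, |a i| ≤ 1) :
    |∑ i ∈ s, a i * y i| ≤ ∑ i ∈ s, |y i| :=
  (abs_sum_le_sum_abs _ _).trans <| sum_le_sum fun i hi => by
    rw [abs_mul]
    exact mul_le_of_le_one_left (abs_nonneg _) (ha i hi)

end PowerSums

/-- With `P j = ∑ yᵢ ^ j`, `bernoulliMomentBound p P k` bounds `E[(∑ Aᵢ yᵢ) ^ k]` for `k ≤ 4`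
(its value `0` for `k > 4` is a placeholder): the term `c * p ^ m * ∏ P` collects the `c` index
patterns of the expanded power with `m` distinct indices, each of mean at most `p ^ m`. -/
def bernoulliMomentBound (p : ℝ) (P : ℕ → ℝ) : ℕ → ℝ
  | 0 => 1
  | 1 => p * P 1
  | 2 => p * P 2 + p ^ 2 * P 1 ^ 2
  | 3 => p * P 3 + 3 * p ^ 2 * P 2 * P 1 + p ^ 3 * P 1 ^ 3
  | 4 => p * P 4 + 3 * p ^ 2 * P 2 ^ 2 + 4 * p ^ 2 * P 3 * P 1 + 6 * p ^ 3 * P 2 * P 1 ^ 2 +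
      p ^ 4 * P 1 ^ 4
  | _ => 0

lemma bernoulliMomentBound_add_le {p t : ℝ} {P : ℕ → ℝ} (hp : 0 ≤ p) (ht : 0 ≤ t)
    (hP : ∀ j, 0 ≤ P j) {k : ℕ} (hk : k ≤ 4) :
    bernoulliMomentBound p P k +
        p * ∑ j ∈ range k, bernoulliMomentBound p P j * t ^ (k - j) * k.choose j ≤
      bernoulliMomentBound p (fun j => t ^ j + P j) k := by
  have := hP 1; have := hP 2; have := hP 3
  interval_cases k <;> rw [← sub_nonneg] <;>
    simp only [bernoulliMomentBound, sum_range_succ, sum_range_zero, Nat.choose] <;>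
    push_cast <;> ring_nf <;> positivity

lemma bernoulliMomentBound_four_le {p : ℝ} {P : ℕ → ℝ} (hp : 0 ≤ p) (hP : ∀ j, 0 ≤ P j)
    (hP₃ : P 3 ^ 2 ≤ P 4 * P 2) (hP₂ : P 2 ^ 2 ≤ P 3 * P 1) :
    bernoulliMomentBound p P 4 ≤
      6 * (p * P 4 + p ^ 2 * P 2 ^ 2 + p ^ 3 * P 1 * P 3 + p ^ 4 * P 1 ^ 4) := by
  have := hP 1; have := hP 2; have := hP 3; have := hP 4
  have hP₂₃ : P 2 ^ 3 ≤ P 4 * P 1 ^ 2 := by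
    rcases (hP 2).eq_or_lt with h | h
    · rw [← h, zero_pow three_ne_zero]
      positivity
    · refine le_of_mul_le_mul_left ?_ h
      calc P 2 * P 2 ^ 3 = (P 2 ^ 2) ^ 2 := by ring
        _ ≤ (P 3 * P 1) ^ 2 := pow_le_pow_left₀ (by positivity) hP₂ 2
        _ = P 3 ^ 2 * P 1 ^ 2 := by ring
        _ ≤ P 4 * P 2 * P 1 ^ 2 := by gcongr
        _ = P 2 * (P 4 * P 1 ^ 2) := by ring
  have h₁ : 2 * (p ^ 2 * P 3 * P 1) ≤ p * P 4 + p ^ 3 * P 2 * P 1 ^ 2 := by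
    refine two_mul_le_add_of_sq_le_mul (by positivity) (by positivity) ?_
    calc (p ^ 2 * P 3 * P 1) ^ 2 = p ^ 4 * P 1 ^ 2 * P 3 ^ 2 := by ring
      _ ≤ p ^ 4 * P 1 ^ 2 * (P 4 * P 2) := by gcongr
      _ = p * P 4 * (p ^ 3 * P 2 * P 1 ^ 2) := by ring
  have h₂ : 3 * (p ^ 3 * P 2 * P 1 ^ 2) ≤ p * P 4 + 2 * (p ^ 4 * P 1 ^ 4) := by
    refine three_mul_le_add_two_mul_of_pow_three_le (by positivity) (by positivity) ?_
    calc (p ^ 3 * P 2 * P 1 ^ 2) ^ 3 = p ^ 9 * P 1 ^ 6 * P 2 ^ 3 := by ring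
      _ ≤ p ^ 9 * P 1 ^ 6 * (P 4 * P 1 ^ 2) := by gcongr
      _ = p * P 4 * (p ^ 4 * P 1 ^ 4) ^ 2 := by ring
  have h₃ : 2 * (p ^ 3 * P 2 * P 1 ^ 2) ≤ p ^ 2 * P 2 ^ 2 + p ^ 4 * P 1 ^ 4 :=
    two_mul_le_add_of_sq_le_mul (by positivity) (by positivity) (le_of_eq (by ring))
  simp only [bernoulliMomentBound]
  linarith [(by positivity : 0 ≤ p * P 4), (by positivity : 0 ≤ p ^ 2 * P 2 ^ 2),
    (by positivity : 0 ≤ p ^ 3 * P 1 * P 3)]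

lemma nonneg_of_eq_zero_or_eq_one {b : ℝ} (hb : b = 0 ∨ b = 1) : 0 ≤ b := by
  rcases hb with rfl | rfl <;> norm_num

lemma abs_le_one_of_eq_zero_or_eq_one {b : ℝ} (hb : b = 0 ∨ b = 1) : |b| ≤ 1 := by
  rcases hb with rfl | rfl <;> norm_num

lemma add_mul_pow_of_eq_zero_or_eq_one {b : ℝ} (hb : b = 0 ∨ b = 1) (w t : ℝ) (k : ℕ) :
    (w + t * b) ^ k = w ^ k + b * ∑ j ∈ range k, w ^ j * t ^ (k - j) * k.choose j := by
  rcases hb with rfl | rfl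
  · simp
  · simp [add_pow, sum_range_succ, add_comm]

section Bernoulli

variable {Ω : Type*} [MeasurableSpace Ω] {μ : Measure Ω} [IsProbabilityMeasure μ]

lemma integrable_pow_of_abs_le {W : Ω → ℝ} {C : ℝ} (hW : Measurable W) (hWC : ∀ ω, |W ω| ≤ C)
    (k : ℕ) : Integrable (fun ω => W ω ^ k) μ :=
  .of_bound (hW.pow_const k).aestronglyMeasurable (C ^ k) <| ae_of_all _ fun ω => by
    simpa [abs_pow] using pow_le_pow_left₀ (abs_nonneg _) (hWC ω) k

lemma integral_add_mul_pow_of_indepFun {W B : Ω → ℝ} {C : ℝ} (hW : Measurable W)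
    (hWC : ∀ ω, |W ω| ≤ C) (hB : Measurable B) (hB01 : ∀ ω, B ω = 0 ∨ B ω = 1)
    (hWB : IndepFun W B μ) (t : ℝ) (k : ℕ) :
    ∫ ω, (W ω + t * B ω) ^ k ∂μ = ∫ ω, W ω ^ k ∂μ +
      (∫ ω, B ω ∂μ) * ∑ j ∈ range k, (∫ ω, W ω ^ j ∂μ) * t ^ (k - j) * k.choose j := by
  set g : ℝ → ℝ := fun w => ∑ j ∈ range k, w ^ j * t ^ (k - j) * k.choose j
  have hg : Measurable g := by fun_prop
  have hterm : ∀ j, Integrable (fun ω => W ω ^ j * t ^ (k - j) * k.choose j) μ := fun j =>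
    ((integrable_pow_of_abs_le hW hWC j).mul_const _).mul_const _
  have hBg : Integrable (fun ω => B ω * g (W ω)) μ :=
    (integrable_finsetSum _ fun j _ => hterm j).bdd_mul hB.aestronglyMeasurable (c := 1) <|
      ae_of_all _ fun ω => by simpa using abs_le_one_of_eq_zero_or_eq_one (hB01 ω)
  have hindep : ∫ ω, B ω * g (W ω) ∂μ = (∫ ω, B ω ∂μ) * ∫ ω, g (W ω) ∂μ :=
    (hWB.symm.comp measurable_id hg).integral_mul_eq_mul_integral hB.aestronglyMeasurable
      (hg.comp hW).aestronglyMeasurable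
  simp_rw [add_mul_pow_of_eq_zero_or_eq_one (hB01 _)]
  rw [integral_add (integrable_pow_of_abs_le hW hWC k) hBg, hindep,
    integral_finsetSum _ fun j _ => hterm j]
  simp only [integral_mul_const]

variable {ι : Type*} {A : ι → Ω → ℝ}

theorem integral_sum_mul_pow_le_bernoulliMomentBound {q : ι → ℝ} {p : ℝ}
    (hmeas : ∀ i, Measurable (A i)) (hval : ∀ i ω, A i ω = 0 ∨ A i ω = 1)
    (hindep : iIndepFun A μ) (hq : ∀ i, ∫ ω, A i ω ∂μ = q i) (hqp : ∀ i, q i ≤ p)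
    {y : ι → ℝ} (hy : ∀ i, 0 ≤ y i) (S : Finset ι) {k : ℕ} (hk : k ≤ 4) :
    ∫ ω, (∑ i ∈ S, A i ω * y i) ^ k ∂μ ≤
      bernoulliMomentBound p (fun j => ∑ i ∈ S, y i ^ j) k := by
  classical
  have hA0 : ∀ i ω, 0 ≤ A i ω := fun i ω => nonneg_of_eq_zero_or_eq_one (hval i ω)
  induction S using Finset.induction_on generalizing k with
  | empty => interval_cases k <;> simp [bernoulliMomentBound]
  | @insert a S ha ih =>
    set W : Ω → ℝ := fun ω => ∑ i ∈ S, A i ω * y i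
    have hW : Measurable W := Finset.measurable_sum _ fun i _ => (hmeas i).mul_const _
    have hW0 : ∀ ω, 0 ≤ W ω := fun ω => sum_nonneg fun i _ => mul_nonneg (hA0 i ω) (hy i)
    have hWC : ∀ ω, |W ω| ≤ ∑ i ∈ S, |y i| := fun ω =>
      abs_sum_mul_le_sum_abs S fun i _ => abs_le_one_of_eq_zero_or_eq_one (hval i ω)
    -- `W` and `A a` are sums of the independent `A i * Function.update y a 1 i` over disjoint sets
    have hWA : IndepFun W (A a) μ := by
      have := (hindep.comp (fun i r => r * Function.update y a 1 i)
        fun i => measurable_mul_const _).indepFun_finsetSum_of_notMem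
          (fun i => (hmeas i).mul_const _) ha
      convert this using 1
      · ext ω
        simp only [W, Finset.sum_apply, Function.comp_apply]
        exact sum_congr rfl fun i hi => by rw [Function.update_of_ne (ne_of_mem_of_not_mem hi ha)]
      · ext ω
        simp
    have hqa : 0 ≤ q a := hq a ▸ integral_nonneg fun ω => hA0 a ω
    have hp : 0 ≤ p := hqa.trans (hqp a)
    have hsplit : ∀ ω, ∑ i ∈ insert a S, A i ω * y i = W ω + y a * A a ω := fun ω => by
      rw [sum_insert ha]; ring
    simp only [hsplit, sum_insert ha]
    rw [integral_add_mul_pow_of_indepFun hW hWC (hmeas a) (hval a) hWA, hq a]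
    calc _ ≤ bernoulliMomentBound p (fun j => ∑ i ∈ S, y i ^ j) k +
          p * ∑ j ∈ range k, bernoulliMomentBound p (fun j => ∑ i ∈ S, y i ^ j) j *
            y a ^ (k - j) * k.choose j := by
          refine add_le_add (ih hk) (mul_le_mul (hqp a) (sum_le_sum fun j hj => ?_)
            (sum_nonneg fun j _ => ?_) hp)
          · have hj4 : j ≤ 4 := by have := mem_range.1 hj; omega
            gcongr
            · exact pow_nonneg (hy a) _
            · exact ih hj4
          · have := pow_nonneg (hy a) (k - j)
            have : 0 ≤ ∫ ω, W ω ^ j ∂μ := integral_nonneg fun ω => pow_nonneg (hW0 ω) j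
            positivity
      _ ≤ _ := bernoulliMomentBound_add_le hp (hy a)
          (fun j => sum_nonneg fun i _ => pow_nonneg (hy i) j) hk

lemma integral_sum_mul_pow_le_abs (hmeas : ∀ i, Measurable (A i))
    (hval : ∀ i ω, A i ω = 0 ∨ A i ω = 1) (S : Finset ι) (x : ι → ℝ) {k : ℕ} (hk : Even k) :
    ∫ ω, (∑ i ∈ S, A i ω * x i) ^ k ∂μ ≤ ∫ ω, (∑ i ∈ S, A i ω * |x i|) ^ k ∂μ := by
  have hA0 : ∀ i ω, 0 ≤ A i ω := fun i ω => nonneg_of_eq_zero_or_eq_one (hval i ω)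
  refine integral_mono_of_nonneg (ae_of_all _ fun ω => hk.pow_nonneg _) ?_
    (ae_of_all _ fun ω => ?_)
  · refine integrable_pow_of_abs_le (C := ∑ i ∈ S, |x i|)
      (Finset.measurable_sum _ fun i _ => (hmeas i).mul_const _) (fun ω => ?_) k
    simpa using abs_sum_mul_le_sum_abs S (y := fun i => |x i|) fun i _ =>
      abs_le_one_of_eq_zero_or_eq_one (hval i ω)
  · have habs : |∑ i ∈ S, A i ω * x i| ≤ ∑ i ∈ S, A i ω * |x i| :=
      (abs_sum_le_sum_abs _ _).trans_eq <| sum_congr rfl fun i _ => by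
        rw [abs_mul, abs_of_nonneg (hA0 i ω)]
    simpa [hk.pow_abs] using pow_le_pow_left₀ (abs_nonneg _) habs k

end Bernoulli

theorem stmt_8_general (n : ℕ) {Ω : Type*} [MeasureSpace Ω] (μ : Measure Ω)
    [IsProbabilityMeasure μ]
    (A : Fin n → Ω → ℝ) (hmeas : ∀ i, Measurable (A i))
    (hval : ∀ i ω, A i ω = 0 ∨ A i ω = 1)
    (hindep : iIndepFun A μ)
    (pvec : Fin n → ℝ) (p : ℝ) (hp : ∀ i, pvec i ≤ p)
    (hbern : ∀ i, ∫ ω, A i ω ∂μ = pvec i)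
    (x : Fin n → ℝ) :
    ∫ ω, (∑ i, A i ω * x i) ^ 4 ∂μ ≤
      6 * (p * ∑ i, x i ^ 4 + p ^ 2 * (∑ i, x i ^ 2) ^ 2 +
        p ^ 3 * (∑ i, |x i|) * (∑ i, |x i| ^ 3) + p ^ 4 * (∑ i, |x i|) ^ 4) := by
  rcases isEmpty_or_nonempty (Fin n) with hn | ⟨⟨i₀⟩⟩
  · simp
  have hp0 : 0 ≤ p := (hbern i₀ ▸ integral_nonneg fun ω =>
    nonneg_of_eq_zero_or_eq_one (hval i₀ ω)).trans (hp i₀)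
  have habs : ∀ i ∈ univ, 0 ≤ |x i| := fun i _ => abs_nonneg _
  calc _ ≤ ∫ ω, (∑ i, A i ω * |x i|) ^ 4 ∂μ :=
        integral_sum_mul_pow_le_abs hmeas hval univ x (by decide)
    _ ≤ bernoulliMomentBound p (fun j => ∑ i, |x i| ^ j) 4 :=
        integral_sum_mul_pow_le_bernoulliMomentBound hmeas hval hindep hbern hp
          (fun i => abs_nonneg _) univ le_rfl
    _ ≤ _ := by
        have := bernoulliMomentBound_four_le (P := fun j => ∑ i, |x i| ^ j) hp0
          (fun j => sum_nonneg fun i _ => by positivity)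
          (sq_sum_pow_three_le univ habs) (by simpa using sq_sum_sq_le univ habs)
        simpa [(by decide : Even 4).pow_abs] using this

/-- Fourth-moment bound for a weighted sum of independent Bernoulli random
variables: if `Aᵢ ~ Bernoulli(pᵢ)` with `pᵢ ≤ p`, and the weights satisfy
`∑ xᵢ² ≤ 1`, `|xᵢ| ≤ 1`, `∑ |xᵢ| ≤ √n`, then `Y = ∑ Aᵢ xᵢ` satisfies
`E[Y⁴] ≤ 6 (p ∑ xᵢ⁴ + p² (∑ xᵢ²)² + p³ (∑|xᵢ|)(∑|xᵢ|³) + p⁴ (∑|xᵢ|)⁴)`. -/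
theorem stmt_8 (n : ℕ) {Ω : Type*} [MeasureSpace Ω] (μ : Measure Ω)
    [IsProbabilityMeasure μ]
    (A : Fin n → Ω → ℝ) (hmeas : ∀ i, Measurable (A i))
    (hval : ∀ i ω, A i ω = 0 ∨ A i ω = 1)
    (hindep : iIndepFun A μ)
    (pvec : Fin n → ℝ) (p : ℝ) (hp : ∀ i, pvec i ≤ p)
    (hbern : ∀ i, ∫ ω, A i ω ∂μ = pvec i)
    (x : Fin n → ℝ) (hx2 : ∑ i, x i ^ 2 ≤ 1) (hxinf : ∀ i, |x i| ≤ 1)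
    (hx1 : ∑ i, |x i| ≤ Real.sqrt n) :
    ∫ ω, (∑ i, A i ω * x i) ^ 4 ∂μ ≤
      6 * (p * ∑ i, x i ^ 4 + p ^ 2 * (∑ i, x i ^ 2) ^ 2 +
        p ^ 3 * (∑ i, |x i|) * (∑ i, |x i| ^ 3) + p ^ 4 * (∑ i, |x i|) ^ 4) :=
  stmt_8_general n μ A hmeas hval hindep pvec p hp hbern x
end
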